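/- There exists an absolute constant C > 0 with the following property: for every n ∈ ℕ₀, every interval I ⊆ ℝ with |I| = 2^{−n}, and every analytic trigonometric polynomial f(θ) = Σ_{j=0}^{M} f_j e^{2πijθ} (with f_j ∈ ℂ, extended by f_j := 0 for j > M), one has ∫_I |f(θ)|² dθ ≤ C · 2^{−n} · [ ( Σ_{j=0}^{2^n − 1} |f_j| )² + Σ_{k=0}^{∞} ( Σ_{j=2^k·2^n}^{2^{k+1}·2^n − 1} |f_j| )² ]. -/

import Mathlib

open MeasureTheory

noncomputable section
namespace Stmt7
open Finset

/-- block index -/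
def blk (N j : ℕ) : ℕ := if j < N then 0 else Nat.log 2 (j / N) + 1

lemma blk_lt {N : ℕ} (hN : 0 < N) (j : ℕ) : j < 2 ^ blk N j * N := by
  unfold blk
  split
  · simpa
  · rename_i h
    push_neg at h
    have h1 : j / N < 2 ^ (Nat.log 2 (j / N) + 1) := Nat.lt_pow_succ_log_self (by norm_num) _
    calc j < (j / N + 1) * N := by
            have h2 := Nat.div_add_mod j N
            have h3 := Nat.mod_lt j hN
            nlinarith
      _ ≤ 2 ^ (Nat.log 2 (j / N) + 1) * N := Nat.mul_le_mul_right _ h1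

lemma blk_ge {N : ℕ} (hN : 0 < N) {j : ℕ} (h : blk N j ≠ 0) :
    2 ^ (blk N j - 1) * N ≤ j := by
  unfold blk at *
  split at h
  · simp at h
  · rename_i hj
    push_neg at hj
    have h1 : 2 ^ Nat.log 2 (j / N) ≤ j / N :=
      Nat.pow_log_le_self 2 (by
        have : 1 ≤ j / N := (Nat.one_le_div_iff hN).2 hj
        omega)
    simp only [if_neg (by omega : ¬ j < N), Nat.add_sub_cancel]
    calc 2 ^ Nat.log 2 (j / N) * N ≤ (j / N) * N := Nat.mul_le_mul_right _ h1
      _ ≤ j := Nat.div_mul_le_self j N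

lemma blk_le (N j : ℕ) : blk N j ≤ j + 1 := by
  unfold blk
  split
  · omega
  · have h1 : Nat.log 2 (j / N) ≤ j / N := Nat.log_le_self _ _
    have h2 : j / N ≤ j := Nat.div_le_self _ _
    omega

/-- the basic exponential -/
def e (r θ : ℝ) : ℂ := Complex.exp (2 * Real.pi * r * θ * Complex.I)

def E (a L r : ℝ) : ℂ := ∫ θ in a..(a + L), e r θ

lemma cont_e (r : ℝ) : Continuous fun θ : ℝ => e r θ := by
  unfold e; fun_prop

lemma norm_e (r θ : ℝ) : ‖e r θ‖ = 1 := by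
  rw [e, Complex.norm_exp]
  have : (2 * (Real.pi:ℂ) * r * θ * Complex.I).re = 0 := by
    simp [Complex.mul_re, Complex.mul_im]
  rw [show ((2:ℂ) * Real.pi * r * θ * Complex.I) = 2 * (Real.pi:ℂ) * r * θ * Complex.I by norm_num,
    this, Real.exp_zero]

lemma mul_conj_e (c d : ℂ) (x y θ : ℝ) :
    (c * e x θ) * (starRingEnd ℂ) (d * e y θ) = (c * (starRingEnd ℂ) d) * e (x - y) θ := by
  unfold e
  rw [map_mul, ← Complex.exp_conj]
  have hc : (starRingEnd ℂ) (2 * (Real.pi:ℂ) * y * θ * Complex.I)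
      = -(2 * (Real.pi:ℂ) * y * θ * Complex.I) := by
    simp only [map_mul, Complex.conj_ofReal, Complex.conj_I, map_ofNat]
    ring
  rw [hc, mul_mul_mul_comm, ← Complex.exp_add]
  congr 2
  push_cast
  ring

lemma E_le_len (a L r : ℝ) (hL : 0 ≤ L) : ‖E a L r‖ ≤ L := by
  have := intervalIntegral.norm_integral_le_of_norm_le_const (C := 1)
    (f := fun θ : ℝ => e r θ) (a := a) (b := a + L)
    (fun x _ => le_of_eq (norm_e r x))
  simpa [E, abs_of_nonneg hL] using this

lemma E_le_inv (a L r : ℝ) (hr : r ≠ 0) : ‖E a L r‖ ≤ 2 / |r| := by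
  have hc : (2 * (Real.pi:ℂ) * r * Complex.I) ≠ 0 := by
    simp [Real.pi_ne_zero, Complex.ofReal_ne_zero, hr]
  set b := a + L
  have key : E a L r
      = (Complex.exp (2 * Real.pi * r * Complex.I * b)
          - Complex.exp (2 * Real.pi * r * Complex.I * a)) / (2 * Real.pi * r * Complex.I) := by
    rw [E, ← integral_exp_mul_complex hc]
    congr 1
    ext θ
    unfold e
    ring_nf
  rw [key, norm_div]
  have h1 : ‖Complex.exp (2 * (Real.pi:ℂ) * r * Complex.I * b)
      - Complex.exp (2 * Real.pi * r * Complex.I * a)‖ ≤ 2 := by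
    refine le_trans (norm_sub_le _ _) ?_
    have e1 : ‖Complex.exp (2 * (Real.pi:ℂ) * r * Complex.I * (b:ℝ))‖ = 1 := by
      have h := norm_e r b
      rw [e] at h
      rw [show (2 * (Real.pi:ℂ) * r * Complex.I * (b:ℝ)) = 2 * Real.pi * r * b * Complex.I by ring]
      exact h
    have e2 : ‖Complex.exp (2 * (Real.pi:ℂ) * r * Complex.I * (a:ℝ))‖ = 1 := by
      have h := norm_e r a
      rw [e] at h
      rw [show (2 * (Real.pi:ℂ) * r * Complex.I * (a:ℝ)) = 2 * Real.pi * r * a * Complex.I by ring]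
      exact h
    rw [e1, e2]; norm_num
  have h2 : ‖(2 * (Real.pi:ℂ) * r * Complex.I)‖ = 2 * Real.pi * |r| := by
    simp [norm_mul, Complex.norm_real, abs_of_pos Real.pi_pos]
  rw [h2]
  have hrpos : 0 < |r| := abs_pos.2 hr
  rw [div_le_div_iff₀ (by positivity) (by positivity)]
  nlinarith [Real.pi_gt_three]

lemma gap {N : ℕ} (hN : 0 < N) {j j' : ℕ} (h : blk N j + 2 ≤ blk N j') :
    j + 2 ^ (blk N j' - 2) * N ≤ j' := by
  have h1 := blk_lt hN j
  have h2 := blk_ge hN (j := j') (by omega)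
  set b := blk N j; set b' := blk N j'
  have e1 : 2 ^ b ≤ 2 ^ (b' - 2) := Nat.pow_le_pow_right (by norm_num) (by omega)
  have e2 : 2 ^ (b' - 1) = 2 * 2 ^ (b' - 2) := by
    rw [← pow_succ']; congr 1; omega
  refine le_of_lt ?_
  calc j + 2 ^ (b' - 2) * N < 2 ^ b * N + 2 ^ (b' - 2) * N := by omega
    _ ≤ 2 ^ (b' - 2) * N + 2 ^ (b' - 2) * N := by
        have := Nat.mul_le_mul_right N e1; omega
    _ = 2 ^ (b' - 1) * N := by rw [e2]; ring
    _ ≤ j' := h2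

lemma pair_bound {N : ℕ} (hN : 0 < N) (a : ℝ) (j j' : ℕ) :
    ‖E a (N:ℝ)⁻¹ ((j:ℝ) - (j':ℝ))‖
      ≤ 8 / N * (2 ^ (min (blk N j) (blk N j')) / 2 ^ (max (blk N j) (blk N j'))) := by
  have hNR : (0:ℝ) < N := by exact_mod_cast hN
  set b := blk N j with hbdef; set b' := blk N j' with hb'def
  by_cases hnear : max b b' ≤ min b b' + 1
  · refine le_trans (E_le_len a ((N:ℝ)⁻¹) ((j:ℝ) - (j':ℝ)) (by positivity)) ?_
    have h1 : (2:ℝ) ^ (max b b') ≤ 2 * 2 ^ (min b b') := by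
      calc (2:ℝ) ^ (max b b') ≤ 2 ^ (min b b' + 1) :=
            pow_le_pow_right₀ (by norm_num) hnear
        _ = 2 * 2 ^ (min b b') := by ring
    have hminpos : (0:ℝ) < 2 ^ (min b b') := by positivity
    have hmaxpos : (0:ℝ) < 2 ^ (max b b') := by positivity
    rw [div_mul_div_comm, le_div_iff₀ (by positivity), inv_mul_eq_div]
    have heq : (↑N * 2 ^ (b ⊔ b') / ↑N : ℝ) = 2 ^ (b ⊔ b') := by field_simp
    rw [heq]; linarith
  · have hfar : b + 2 ≤ b' ∨ b' + 2 ≤ b := by omega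
    have key : (2:ℝ) ^ (max b b' - 2) * N ≤ |(j:ℝ) - j'| →
        ‖E a (N:ℝ)⁻¹ ((j:ℝ) - (j':ℝ))‖
          ≤ 8 / N * (2 ^ (min b b') / 2 ^ (max b b')) := by
      intro hge
      set c := min b b'; set c' := max b b'
      have hpos : (0:ℝ) < 2 ^ (c' - 2) * N := by positivity
      have hr : ((j:ℝ) - j') ≠ 0 := by
        intro h0; rw [h0] at hge; simp at hge; nlinarith
      refine le_trans (E_le_inv a ((N:ℝ)⁻¹) _ hr) ?_
      have h3 : 2 / |(j:ℝ) - j'| ≤ 2 / ((2:ℝ) ^ (c' - 2) * N) :=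
        div_le_div_of_nonneg_left (by norm_num) hpos hge
      refine le_trans h3 ?_
      have hc'ge : 2 ≤ c' := by omega
      have hd : (2:ℝ) ^ c' = 2 ^ (c' - 2) * 4 := by
        rw [show c' = (c' - 2) + 2 by omega, pow_add]; norm_num
      have h2c : (1:ℝ) ≤ 2 ^ c := one_le_pow₀ (by norm_num)
      have hp : (0:ℝ) < 2 ^ (c' - 2) := by positivity
      rw [div_mul_div_comm, div_le_div_iff₀ hpos (by positivity), hd]
      nlinarith
    rcases hfar with hf | hf
    · have hg := gap hN hf
      apply key
      rw [max_eq_right (by omega : b ≤ b')]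
      have hcast : ((j:ℝ)) + ((2 ^ (b' - 2) * N : ℕ) : ℝ) ≤ (j' : ℝ) := by
        exact_mod_cast hg
      push_cast at hcast
      rw [abs_sub_comm, abs_of_nonneg (by
        linarith [hcast, (by positivity : (0:ℝ) < (2:ℝ)^(b'-2) * N)])]
      linarith
    · have hg := gap hN hf
      apply key
      rw [max_eq_left (by omega : b' ≤ b)]
      have hcast : ((j':ℝ)) + ((2 ^ (b - 2) * N : ℕ) : ℝ) ≤ (j : ℝ) := by
        exact_mod_cast hg
      push_cast at hcast
      rw [abs_of_nonneg (by linarith [(by positivity : (0:ℝ) < (2:ℝ)^(b-2) * N)])]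
      linarith

/-- the row sum of weights is at most 3 -/
lemma rowsum (K k : ℕ) : ∑ k' ∈ range K, ((2:ℝ) ^ (min k k') / 2 ^ (max k k')) ≤ 3 := by
  have geom1 : ∀ m : ℕ, ∑ k' ∈ range m, ((2:ℝ))^k' = 2^m - 1 := by
    intro m
    induction m with
    | zero => simp
    | succ m ih => rw [Finset.sum_range_succ, ih]; ring
  have part1 : ∀ m : ℕ, m ≤ k + 1 → ∑ k' ∈ range m, ((2:ℝ) ^ (min k k') / 2 ^ (max k k')) ≤ 2 := by
    intro m hm
    have hc : ∀ k' ∈ range m, ((2:ℝ) ^ (min k k') / 2 ^ (max k k')) = 2^k' / 2^k := by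
      intro k' hk'
      have : k' ≤ k := by simp at hk'; omega
      rw [min_eq_right this, max_eq_left this]
    rw [Finset.sum_congr rfl hc, ← Finset.sum_div, geom1]
    rw [div_le_iff₀ (by positivity)]
    have h1 : (2:ℝ)^m ≤ 2^(k+1) := pow_le_pow_right₀ (by norm_num) hm
    have h2 : (2:ℝ)^(k+1) = 2 * 2^k := by ring
    linarith
  by_cases hK : K ≤ k + 1
  · exact le_trans (part1 K hK) (by norm_num)
  · push_neg at hK
    rw [Finset.range_eq_Ico, ← Finset.sum_Ico_consecutive _ (Nat.zero_le (k+1)) (le_of_lt hK),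
      ← Finset.range_eq_Ico]
    have p1 := part1 (k+1) le_rfl
    have p2 : ∑ k' ∈ Finset.Ico (k+1) K, ((2:ℝ) ^ (min k k') / 2 ^ (max k k')) ≤ 1 := by
      have hc : ∀ k' ∈ Finset.Ico (k+1) K, ((2:ℝ) ^ (min k k') / 2 ^ (max k k'))
          = (1/2:ℝ)^(k' - k) := by
        intro k' hk'
        simp only [Finset.mem_Ico] at hk'
        have hle : k ≤ k' := by omega
        rw [min_eq_left hle, max_eq_right hle, div_pow, one_pow,
          show k' = k + (k' - k) by omega, pow_add]
        field_simp
        rw [Nat.add_sub_cancel_left]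
      rw [Finset.sum_congr rfl hc, Finset.sum_Ico_eq_sum_range]
      have : ∀ i ∈ range (K - (k+1)), ((1/2:ℝ))^(k + 1 + i - k) = (1/2:ℝ) * (1/2)^i := by
        intro i _
        rw [show k + 1 + i - k = i + 1 by omega, pow_succ]
        ring
      rw [Finset.sum_congr rfl this, ← Finset.mul_sum]
      have hgeom : ∑ i ∈ range (K - (k+1)), ((1/2:ℝ))^i ≤ 2 := by
        have heq : ∀ n : ℕ, ∑ i ∈ range n, ((1/2:ℝ))^i = 2 - 2 * (1/2)^n := by
          intro n
          induction n with
          | zero => simp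
          | succ m ih => rw [Finset.sum_range_succ, ih]; ring
        rw [heq]
        have : (0:ℝ) ≤ (1/2:ℝ)^(K - (k+1)) := by positivity
        linarith
      nlinarith [hgeom]
    linarith

lemma stepC {N : ℕ} (hN : 0 < N) (M : ℕ) (u : ℕ → ℝ) (hu : ∀ j, 0 ≤ u j) :
    ∑ j ∈ range (M+1), ∑ j' ∈ range (M+1),
        u j * u j' * (8 / N * (2 ^ (min (blk N j) (blk N j')) / 2 ^ (max (blk N j) (blk N j'))))
      ≤ 24 / N * ∑ k ∈ range (M+2),
          (∑ j ∈ (range (M+1)).filter (fun j => blk N j = k), u j)^2 := by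
  have hNR : (0:ℝ) < N := by exact_mod_cast hN
  set s := range (M+1) with hs
  set K := M + 2 with hK
  set t : ℕ → ℝ := fun k => ∑ j ∈ s.filter (fun j => blk N j = k), u j with ht
  have htnn : ∀ k, 0 ≤ t k := fun k => Finset.sum_nonneg fun j _ => hu j
  have hmaps : ∀ j ∈ s, blk N j ∈ range K := by
    intro j hj
    simp only [hs, Finset.mem_range] at hj ⊢
    have := blk_le N j
    omega
  set c : ℕ → ℕ → ℝ := fun k k' => 8 / N * (2 ^ (min k k') / 2 ^ (max k k')) with hc
  have hcnn : ∀ k k', 0 ≤ c k k' := by intro k k'; simp only [hc]; positivity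
  have hfact : ∀ (A B : Finset ℕ) (C : ℝ),
      ∑ j ∈ A, ∑ j' ∈ B, u j * u j' * C = C * ((∑ j ∈ A, u j) * (∑ j' ∈ B, u j')) := by
    intro A B C
    rw [Finset.sum_mul_sum, Finset.mul_sum]
    refine Finset.sum_congr rfl fun j _ => ?_
    rw [Finset.mul_sum]
    refine Finset.sum_congr rfl fun j' _ => by ring
  have h1 : ∑ j ∈ s, ∑ j' ∈ s,
        u j * u j' * c (blk N j) (blk N j')
      = ∑ k ∈ range K, ∑ k' ∈ range K, c k k' * (t k * t k') := by
    rw [← Finset.sum_fiberwise_of_maps_to hmaps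
      (fun j => ∑ j' ∈ s, u j * u j' * c (blk N j) (blk N j'))]
    refine Finset.sum_congr rfl fun k _ => ?_
    have inner1 : ∀ j ∈ s.filter (fun j => blk N j = k),
        (∑ j' ∈ s, u j * u j' * c (blk N j) (blk N j'))
          = ∑ k' ∈ range K, ∑ j' ∈ s.filter (fun j' => blk N j' = k'), u j * u j' * c k (blk N j') := by
      intro j hj
      have hbj : blk N j = k := (Finset.mem_filter.1 hj).2
      rw [hbj, ← Finset.sum_fiberwise_of_maps_to hmaps (fun j' => u j * u j' * c k (blk N j'))]
    rw [Finset.sum_congr rfl inner1, Finset.sum_comm]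
    refine Finset.sum_congr rfl fun k' _ => ?_
    have inner2 : ∀ j ∈ s.filter (fun j => blk N j = k),
        (∑ j' ∈ s.filter (fun j' => blk N j' = k'), u j * u j' * c k (blk N j'))
          = ∑ j' ∈ s.filter (fun j' => blk N j' = k'), u j * u j' * c k k' := by
      intro j hj
      refine Finset.sum_congr rfl fun j' hj' => ?_
      rw [(Finset.mem_filter.1 hj').2]
    rw [Finset.sum_congr rfl inner2, hfact]
  rw [h1]
  have h2 : ∑ k ∈ range K, ∑ k' ∈ range K, c k k' * (t k * t k')
      ≤ ∑ k ∈ range K, ∑ k' ∈ range K, c k k' * ((t k ^ 2 + t k' ^ 2) / 2) := by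
    refine Finset.sum_le_sum fun k _ => Finset.sum_le_sum fun k' _ => ?_
    refine mul_le_mul_of_nonneg_left ?_ (hcnn k k')
    nlinarith [sq_nonneg (t k - t k'), htnn k, htnn k']
  have hsymm : ∑ k ∈ range K, ∑ k' ∈ range K, c k k' * t k' ^ 2
      = ∑ k ∈ range K, ∑ k' ∈ range K, c k k' * t k ^ 2 := by
    rw [Finset.sum_comm]
    refine Finset.sum_congr rfl fun k _ => Finset.sum_congr rfl fun k' _ => ?_
    simp only [hc]
    rw [min_comm, max_comm]
  have h3 : ∑ k ∈ range K, ∑ k' ∈ range K, c k k' * ((t k ^ 2 + t k' ^ 2) / 2)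
      = ∑ k ∈ range K, ∑ k' ∈ range K, c k k' * t k ^ 2 := by
    have expand : ∀ k k', c k k' * ((t k ^ 2 + t k' ^ 2) / 2)
        = c k k' * t k ^ 2 / 2 + c k k' * t k' ^ 2 / 2 := fun k k' => by ring
    simp_rw [expand, Finset.sum_add_distrib, ← Finset.sum_div]
    rw [hsymm]
    ring
  have h4 : ∑ k ∈ range K, ∑ k' ∈ range K, c k k' * t k ^ 2
      ≤ ∑ k ∈ range K, (24 / N) * t k ^ 2 := by
    refine Finset.sum_le_sum fun k _ => ?_
    have : ∑ k' ∈ range K, c k k' * t k ^ 2 = (∑ k' ∈ range K, c k k') * t k ^ 2 := by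
      rw [Finset.sum_mul]
    rw [this]
    refine mul_le_mul_of_nonneg_right ?_ (sq_nonneg _)
    have : ∑ k' ∈ range K, c k k' = 8 / N * ∑ k' ∈ range K, (2 ^ (min k k') / 2 ^ (max k k') : ℝ) := by
      rw [Finset.mul_sum]
    rw [this]
    have hrow := rowsum K k
    calc 8 / (N:ℝ) * ∑ k' ∈ range K, (2 ^ (min k k') / 2 ^ (max k k') : ℝ)
        ≤ 8 / N * 3 := by
          refine mul_le_mul_of_nonneg_left hrow (by positivity)
      _ = 24 / N := by ring
  calc ∑ k ∈ range K, ∑ k' ∈ range K, c k k' * (t k * t k')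
      ≤ ∑ k ∈ range K, ∑ k' ∈ range K, c k k' * ((t k ^ 2 + t k' ^ 2) / 2) := h2
    _ = ∑ k ∈ range K, ∑ k' ∈ range K, c k k' * t k ^ 2 := h3
    _ ≤ ∑ k ∈ range K, (24 / N) * t k ^ 2 := h4
    _ = 24 / N * ∑ k ∈ range K, t k ^ 2 := by rw [Finset.mul_sum]

lemma stepA (a L : ℝ) (M : ℕ) (f : ℕ → ℂ) :
    (∫ θ in a..(a + L), ‖∑ j ∈ range (M+1), f j * e (j:ℝ) θ‖ ^ 2)
      ≤ ∑ j ∈ range (M+1), ∑ j' ∈ range (M+1),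
          ‖f j‖ * ‖f j'‖ * ‖E a L ((j:ℝ) - (j':ℝ))‖ := by
  set s := range (M+1) with hs
  have h1 : ∀ θ : ℝ, ‖∑ j ∈ s, f j * e (j:ℝ) θ‖ ^ 2
      = ∑ j ∈ s, ∑ j' ∈ s, ((f j * (starRingEnd ℂ) (f j')) * e ((j:ℝ) - (j':ℝ)) θ).re := by
    intro θ
    have hsq : ‖∑ j ∈ s, f j * e (j:ℝ) θ‖ ^ 2
        = ((∑ j ∈ s, f j * e (j:ℝ) θ) * (starRingEnd ℂ) (∑ j ∈ s, f j * e (j:ℝ) θ)).re := by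
      rw [Complex.mul_conj, Complex.ofReal_re, ← Complex.sq_norm]
    rw [hsq]
    have hexp : (∑ j ∈ s, f j * e (j:ℝ) θ) * (starRingEnd ℂ) (∑ j ∈ s, f j * e (j:ℝ) θ)
        = ∑ j ∈ s, ∑ j' ∈ s, (f j * (starRingEnd ℂ) (f j')) * e ((j:ℝ) - (j':ℝ)) θ := by
      rw [map_sum, Finset.sum_mul_sum]
      exact Finset.sum_congr rfl fun j _ => Finset.sum_congr rfl fun j' _ =>
        mul_conj_e (f j) (f j') (j:ℝ) (j':ℝ) θ
    rw [hexp, Complex.re_sum]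
    exact Finset.sum_congr rfl fun j _ => (Complex.re_sum _ _).symm ▸ rfl
  have hcont : ∀ (j j' : ℕ), Continuous fun θ : ℝ =>
      ((f j * (starRingEnd ℂ) (f j')) * e ((j:ℝ) - (j':ℝ)) θ).re :=
    fun j j' => Complex.continuous_re.comp (continuous_const.mul (cont_e _))
  have hint : ∀ (j j' : ℕ), IntervalIntegrable
      (fun θ : ℝ => (f j * (starRingEnd ℂ) (f j')) * e ((j:ℝ) - (j':ℝ)) θ) volume a (a+L) :=
    fun j j' => (continuous_const.mul (cont_e _)).intervalIntegrable _ _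
  have hterm : ∀ (j j' : ℕ),
      (∫ θ in a..(a+L), ((f j * (starRingEnd ℂ) (f j')) * e ((j:ℝ) - (j':ℝ)) θ).re)
        = ((f j * (starRingEnd ℂ) (f j')) * E a L ((j:ℝ) - (j':ℝ))).re := by
    intro j j'
    have h := Complex.reCLM.intervalIntegral_comp_comm (hint j j')
    simp only [Complex.reCLM_apply] at h
    rw [h, intervalIntegral.integral_const_mul]
    rfl
  calc (∫ θ in a..(a + L), ‖∑ j ∈ s, f j * e (j:ℝ) θ‖ ^ 2)
      = ∫ θ in a..(a+L), ∑ j ∈ s, ∑ j' ∈ s,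
          ((f j * (starRingEnd ℂ) (f j')) * e ((j:ℝ) - (j':ℝ)) θ).re := by
        refine intervalIntegral.integral_congr fun θ _ => h1 θ
    _ = ∑ j ∈ s, ∫ θ in a..(a+L), ∑ j' ∈ s,
          ((f j * (starRingEnd ℂ) (f j')) * e ((j:ℝ) - (j':ℝ)) θ).re := by
        refine intervalIntegral.integral_finset_sum fun j _ => ?_
        exact (continuous_finset_sum _ fun j' _ => hcont j j').intervalIntegrable _ _
    _ = ∑ j ∈ s, ∑ j' ∈ s, ∫ θ in a..(a+L),
          ((f j * (starRingEnd ℂ) (f j')) * e ((j:ℝ) - (j':ℝ)) θ).re := by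
        refine Finset.sum_congr rfl fun j _ => ?_
        exact intervalIntegral.integral_finset_sum fun j' _ => (hcont j j').intervalIntegrable _ _
    _ = ∑ j ∈ s, ∑ j' ∈ s, ((f j * (starRingEnd ℂ) (f j')) * E a L ((j:ℝ) - (j':ℝ))).re := by
        exact Finset.sum_congr rfl fun j _ => Finset.sum_congr rfl fun j' _ => hterm j j'
    _ ≤ ∑ j ∈ s, ∑ j' ∈ s, ‖f j‖ * ‖f j'‖ * ‖E a L ((j:ℝ) - (j':ℝ))‖ := by
        refine Finset.sum_le_sum fun j _ => Finset.sum_le_sum fun j' _ => ?_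
        refine le_trans (Complex.re_le_norm _) ?_
        rw [norm_mul, norm_mul, RCLike.norm_conj]


lemma tail {N : ℕ} (hN : 0 < N) (M : ℕ) (f : ℕ → ℂ) (hf : ∀ j, M < j → f j = 0) :
    ∑ k ∈ range (M+2), (∑ j ∈ (range (M+1)).filter (fun j => blk N j = k), ‖f j‖)^2
      ≤ (∑ j ∈ range N, ‖f j‖)^2
        + ∑' k : ℕ, (∑ j ∈ Finset.Ico (2^k * N) (2^(k+1) * N), ‖f j‖)^2 := by
  set t : ℕ → ℝ := fun k => ∑ j ∈ (range (M+1)).filter (fun j => blk N j = k), ‖f j‖ with ht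
  set S : ℕ → ℝ := fun k => if k = 0 then ∑ j ∈ range N, ‖f j‖
    else ∑ j ∈ Finset.Ico (2^(k-1) * N) (2^k * N), ‖f j‖ with hS
  have hsub : ∀ k, t k ≤ S k := by
    intro k
    match k with
    | 0 =>
      refine Finset.sum_le_sum_of_subset_of_nonneg ?_ (fun j _ _ => norm_nonneg _)
      intro j hj
      have hbj : blk N j = 0 := (Finset.mem_filter.1 hj).2
      have := blk_lt hN j
      rw [hbj] at this
      simp only [pow_zero, one_mul] at this
      simpa using this
    | k + 1 =>
      simp only [hS, Nat.add_sub_cancel, if_neg (Nat.succ_ne_zero k)]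
      refine Finset.sum_le_sum_of_subset_of_nonneg ?_ (fun j _ _ => norm_nonneg _)
      intro j hj
      have hbj : blk N j = k + 1 := (Finset.mem_filter.1 hj).2
      have h1 := blk_lt hN j
      have h2 := blk_ge hN (j := j) (by rw [hbj]; exact Nat.succ_ne_zero k)
      rw [hbj] at h1 h2
      simp only [Nat.add_sub_cancel] at h2
      exact Finset.mem_Ico.2 ⟨h2, h1⟩
  have htnn : ∀ k, 0 ≤ t k := fun k => Finset.sum_nonneg fun j _ => norm_nonneg _
  have hSnn : ∀ k, 0 ≤ S k := by
    intro k
    simp only [hS]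
    split <;> exact Finset.sum_nonneg fun j _ => norm_nonneg _
  have h1 : ∑ k ∈ range (M+2), t k ^ 2 ≤ ∑ k ∈ range (M+2), S k ^ 2 :=
    Finset.sum_le_sum fun k _ => pow_le_pow_left₀ (htnn k) (hsub k) 2
  set g : ℕ → ℝ := fun k => (∑ j ∈ Finset.Ico (2^k * N) (2^(k+1) * N), ‖f j‖)^2 with hg
  have hgz : ∀ k, M + 1 ≤ k → g k = 0 := by
    intro k hk
    simp only [hg]
    have : ∀ j ∈ Finset.Ico (2^k * N) (2^(k+1) * N), ‖f j‖ = 0 := by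
      intro j hj
      have h2k : k < 2 ^ k := Nat.lt_two_pow_self
      have hjge : 2^k * N ≤ j := (Finset.mem_Ico.1 hj).1
      have : M < j := by
        have : 2^k ≤ 2^k * N := Nat.le_mul_of_pos_right _ hN
        omega
      rw [hf j this, norm_zero]
    rw [Finset.sum_congr rfl this]
    simp
  have hsumm : Summable g := by
    refine summable_of_ne_finset_zero (f := g) (s := range (M+1)) ?_
    intro k hk
    simp only [Finset.mem_range] at hk
    exact hgz k (by omega)
  have h2 : ∑ k ∈ range (M+2), S k ^ 2 = (∑ k ∈ range (M+1), g k) + S 0 ^ 2 := by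
    rw [Finset.sum_range_succ']
    congr 1
  have h3 : ∑ k ∈ range (M+1), g k ≤ ∑' k, g k :=
    Summable.sum_le_tsum _ (fun k _ => sq_nonneg _) hsumm
  have hS0 : S 0 = ∑ j ∈ range N, ‖f j‖ := by simp [hS]
  calc ∑ k ∈ range (M+2), t k ^ 2 ≤ ∑ k ∈ range (M+2), S k ^ 2 := h1
    _ = (∑ k ∈ range (M+1), g k) + S 0 ^ 2 := h2
    _ ≤ (∑' k, g k) + S 0 ^ 2 := by linarith
    _ = (∑ j ∈ range N, ‖f j‖)^2 + ∑' k, g k := by rw [hS0]; ring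

theorem main : ∃ C : ℝ, 0 < C ∧ ∀ (n : ℕ) (a : ℝ) (M : ℕ) (f : ℕ → ℂ), (∀ j, M < j → f j = 0) →
      (∫ θ in a..(a + ((2:ℝ) ^ n)⁻¹),
          ‖∑ j ∈ Finset.range (M + 1),
              f j * Complex.exp (2 * Real.pi * j * θ * Complex.I)‖ ^ 2)
        ≤ C * ((2:ℝ) ^ n)⁻¹ *
            ((∑ j ∈ Finset.range (2 ^ n), ‖f j‖) ^ 2 +
              ∑' k : ℕ, (∑ j ∈ Finset.Ico (2 ^ k * 2 ^ n) (2 ^ (k + 1) * 2 ^ n), ‖f j‖) ^ 2) := by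
  refine ⟨24, by norm_num, ?_⟩
  intro n a M f hf
  set N : ℕ := 2 ^ n with hNdef
  have hN : 0 < N := Nat.pow_pos (by norm_num)
  have hNR : ((N:ℕ):ℝ) = (2:ℝ) ^ n := by rw [hNdef]; push_cast; ring
  rw [show ((2:ℝ)^n)⁻¹ = ((N:ℕ):ℝ)⁻¹ by rw [hNR]]
  have hGeq : ∀ θ : ℝ, (∑ j ∈ range (M + 1), f j * Complex.exp (2 * Real.pi * j * θ * Complex.I))
      = ∑ j ∈ range (M + 1), f j * e (j:ℝ) θ := by
    intro θ
    refine Finset.sum_congr rfl fun j _ => ?_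
    unfold e
    norm_cast
  calc (∫ θ in a..(a + ((N:ℕ):ℝ)⁻¹),
          ‖∑ j ∈ range (M + 1), f j * Complex.exp (2 * Real.pi * j * θ * Complex.I)‖ ^ 2)
      = ∫ θ in a..(a + ((N:ℕ):ℝ)⁻¹), ‖∑ j ∈ range (M + 1), f j * e (j:ℝ) θ‖ ^ 2 := by
        refine intervalIntegral.integral_congr fun θ _ => ?_
        rw [hGeq]
    _ ≤ ∑ j ∈ range (M+1), ∑ j' ∈ range (M+1),
          ‖f j‖ * ‖f j'‖ * ‖E a ((N:ℕ):ℝ)⁻¹ ((j:ℝ) - (j':ℝ))‖ := stepA a _ M f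
    _ ≤ ∑ j ∈ range (M+1), ∑ j' ∈ range (M+1), ‖f j‖ * ‖f j'‖ *
          (8 / N * (2 ^ (min (blk N j) (blk N j')) / 2 ^ (max (blk N j) (blk N j')))) := by
        refine Finset.sum_le_sum fun j _ => Finset.sum_le_sum fun j' _ => ?_
        exact mul_le_mul_of_nonneg_left (pair_bound hN a j j') (by positivity)
    _ ≤ 24 / N * ∑ k ∈ range (M+2),
          (∑ j ∈ (range (M+1)).filter (fun j => blk N j = k), ‖f j‖)^2 :=
        stepC hN M (fun j => ‖f j‖) (fun j => norm_nonneg _)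
    _ ≤ 24 / N * ((∑ j ∈ range N, ‖f j‖)^2
          + ∑' k : ℕ, (∑ j ∈ Finset.Ico (2^k * N) (2^(k+1) * N), ‖f j‖)^2) := by
        refine mul_le_mul_of_nonneg_left (tail hN M f hf) (by positivity)
    _ = 24 * ((N:ℕ):ℝ)⁻¹ * ((∑ j ∈ range N, ‖f j‖)^2
          + ∑' k : ℕ, (∑ j ∈ Finset.Ico (2^k * N) (2^(k+1) * N), ‖f j‖)^2) := by
        ring

end Stmt7

/-- dyadic-block unconditionality estimate.
There is an absolute constant `C > 0` such that for every `n ∈ ℕ₀`, every interval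
`I = [a, a + 2^{-n}]` of length `2^{-n}`, and every analytic trigonometric polynomial
`f(θ) = Σ_{j=0}^{M} f_j e^{2πijθ}` (coefficients extended by `0` beyond `M`),
`∫_I |f(θ)|² dθ ≤ C · 2^{-n} · [ (Σ_{j=0}^{2^n-1} |f_j|)² + Σ_{k=0}^∞ (Σ_{j=2^k·2^n}^{2^{k+1}·2^n - 1} |f_j|)² ]`. -/
theorem stmt_7 :
    ∃ C : ℝ, 0 < C ∧ ∀ (n : ℕ) (a : ℝ) (M : ℕ) (f : ℕ → ℂ), (∀ j, M < j → f j = 0) →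
      (∫ θ in a..(a + ((2:ℝ) ^ n)⁻¹),
          ‖∑ j ∈ Finset.range (M + 1),
              f j * Complex.exp (2 * Real.pi * j * θ * Complex.I)‖ ^ 2)
        ≤ C * ((2:ℝ) ^ n)⁻¹ *
            ((∑ j ∈ Finset.range (2 ^ n), ‖f j‖) ^ 2 +
              ∑' k : ℕ, (∑ j ∈ Finset.Ico (2 ^ k * 2 ^ n) (2 ^ (k + 1) * 2 ^ n), ‖f j‖) ^ 2) := by
  exact Stmt7.main
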